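/- Let n ≥ 3 and let A = (1, a₂, a₃, …, aₙ) and B = (−1, b₂, b₃, …, bₙ) be points of X. Then the geodesic distance d(A,B) equals the minimum, over all p with 1 ≤ p ≤ n − 1, all sequences (c₁, …, c_p) of distinct indices in {2, …, n}, and all sign choices ε_{c₁}, …, ε_{c_p} ∈ {−1, +1}, of the quantity max( {2 + ε_{c_t} a_{c_t} + ε_{c_{t+1}} b_{c_{t+1}} : 1 ≤ t ≤ p − 1} ∪ {4 + ε_{c_p} a_{c_p} + ε_{c₁} b_{c₁}} ). -/

import Mathlib

open Set
open scoped ENNReal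

/-- The geodesic distance between two points on the unit sphere (for the sup norm)
of `Fin n → ℝ`: the infimum over continuous paths `γ : [0,1] → {x : ‖x‖ = 1}` joining
them of the length of `γ`, i.e. its total variation. -/
noncomputable def geoDist {n : ℕ} (A B : Fin n → ℝ) : ℝ≥0∞ :=
  ⨅ (γ : ℝ → (Fin n → ℝ)) (_ : ContinuousOn γ (Icc 0 1)) (_ : γ 0 = A)
    (_ : γ 1 = B) (_ : ∀ t ∈ Icc (0:ℝ) 1, ‖γ t‖ = 1),
    eVariationOn γ (Icc 0 1)

/-- The `t`-th term (for `t : Fin p`) of the maximum defining the length of the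
candidate path determined by a sequence `c` of `p` distinct indices (0-based:
values in `{1,…,n-1}`, corresponding to the paper's `{2,…,n}`) and signs `ε`:
for `t < p - 1` the term is `2 + ε_{c t} * a_{c t} + ε_{c (t+1)} * b_{c (t+1)}`,
and for `t = p - 1` the term is `4 + ε_{c (p-1)} * a_{c (p-1)} + ε_{c 0} * b_{c 0}`. -/
noncomputable def chainTerm {n : ℕ} (A B : Fin n → ℝ)
    {p : ℕ} (c : Fin p → Fin n) (ε : Fin p → ℝ) (t : Fin p) : ℝ :=
  if h : (t : ℕ) = p - 1 then
    4 + ε t * A (c t) +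
      ε ⟨0, by have := t.isLt; omega⟩ * B (c ⟨0, by have := t.isLt; omega⟩)
  else
    2 + ε t * A (c t) +
      ε ⟨(t : ℕ) + 1, by have := t.isLt; omega⟩ *
        B (c ⟨(t : ℕ) + 1, by have := t.isLt; omega⟩)

/-- The length of the candidate path determined by `c` and `ε`: the maximum of the
chain terms. -/
noncomputable def candidateLength {n : ℕ} (A B : Fin n → ℝ)
    {p : ℕ} (c : Fin p → Fin n) (ε : Fin p → ℝ) : ℝ :=
  sSup (Set.range (chainTerm A B c ε))

section Auxiliary

open ENNReal

variable {n : ℕ}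

/-- The set of candidate lengths appearing on the right-hand side. -/
def SpSet (n : ℕ) (A B : Fin n → ℝ) : Set ℝ :=
  {q : ℝ |
    ∃ (p : ℕ) (c : Fin p → Fin n) (ε : Fin p → ℝ),
      1 ≤ p ∧ p ≤ n - 1 ∧ Function.Injective c ∧ (∀ t, 1 ≤ ((c t : ℕ))) ∧
      (∀ t, ε t = 1 ∨ ε t = -1) ∧ q = candidateLength A B c ε}

lemma SpSet_finite (A B : Fin n → ℝ) : (SpSet n A B).Finite := by
  classical
  have : SpSet n A B ⊆ Set.range (fun x : Σ p : Fin n, (Fin p → Fin n) × (Fin p → Bool) =>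
      candidateLength A B x.2.1 (fun t => if x.2.2 t then (1:ℝ) else -1)) := by
    rintro q ⟨p, c, ε, hp1, hpn, hc, hc1, hε, rfl⟩
    have hpn' : p < n := by omega
    refine ⟨⟨⟨p, hpn'⟩, c, fun t => ε t = 1⟩, ?_⟩
    simp only
    congr 1
    funext t
    rcases hε t with h | h
    · simp [h]
    · have hne : ¬ (ε t = 1) := by rw [h]; norm_num
      rw [if_neg (by simpa using hne), h]
  exact Set.Finite.subset (Set.finite_range _) this

lemma abs_sgn_sub {s a : ℝ} (hs : s = 1 ∨ s = -1) (ha : a ∈ Set.Icc (-1:ℝ) 1) :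
    |s - a| = 1 - s * a := by
  rcases hs with rfl | rfl
  · rw [abs_of_nonneg (by linarith [ha.2])]; ring
  · rw [abs_of_nonpos (by linarith [ha.1])]; ring

lemma sgn_term_nonneg {s a : ℝ} (hs : s = 1 ∨ s = -1) (ha : a ∈ Set.Icc (-1:ℝ) 1) :
    0 ≤ 1 - s * a := by
  rcases hs with rfl | rfl <;> [linarith [ha.2]; linarith [ha.1]]

lemma sgn_term_le_two {s a : ℝ} (hs : s = 1 ∨ s = -1) (ha : a ∈ Set.Icc (-1:ℝ) 1) :
    1 - s * a ≤ 2 := by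
  rcases hs with rfl | rfl <;> [linarith [ha.1]; linarith [ha.2]]

/-- Coordinatewise lower bound for the variation over a subinterval. -/
lemma ofReal_abs_le_evar (γ : ℝ → Fin n → ℝ) {x y : ℝ} (hxy : x ≤ y) (i : Fin n) :
    ENNReal.ofReal |γ y i - γ x i| ≤ eVariationOn γ (Set.Icc x y) := by
  have h1 : edist (γ x i) (γ y i) ≤ edist (γ x) (γ y) := edist_le_pi_edist (γ x) (γ y) i
  have h2 : edist (γ x) (γ y) ≤ eVariationOn γ (Set.Icc x y) :=
    eVariationOn.edist_le γ (Set.left_mem_Icc.2 hxy) (Set.right_mem_Icc.2 hxy)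
  refine le_trans ?_ (h1.trans h2)
  rw [edist_dist, Real.dist_eq]
  exact ENNReal.ofReal_le_ofReal (by rw [abs_sub_comm])

lemma evar_Icc_add {γ : ℝ → Fin n → ℝ} {a b c : ℝ} (hab : a ≤ b) (hbc : b ≤ c) :
    eVariationOn γ (Set.Icc a b) + eVariationOn γ (Set.Icc b c)
      = eVariationOn γ (Set.Icc a c) := by
  have h := eVariationOn.Icc_add_Icc γ (s := Set.Icc a c) hab hbc
    (Set.mem_Icc.2 ⟨hab, hbc⟩)
  have e1 : Set.Icc a c ∩ Set.Icc a b = Set.Icc a b :=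
    Set.inter_eq_self_of_subset_right (Set.Icc_subset_Icc le_rfl hbc)
  have e2 : Set.Icc a c ∩ Set.Icc b c = Set.Icc b c :=
    Set.inter_eq_self_of_subset_right (Set.Icc_subset_Icc hab le_rfl)
  have e3 : Set.Icc a c ∩ Set.Icc a c = Set.Icc a c := Set.inter_self _
  rwa [e1, e2, e3] at h

/-- Two-split lower bound: if `r₁` is witnessed on `[0,x]` and `r₂` on `[x,1]`
then `r₁ + r₂` bounds the total variation from below. -/
lemma ofReal_two_split_le {γ : ℝ → Fin n → ℝ} {x r1 r2 : ℝ}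
    (hx0 : 0 ≤ x) (hx1 : x ≤ 1) (h1 : 0 ≤ r1) (h2 : 0 ≤ r2)
    (hb1 : ENNReal.ofReal r1 ≤ eVariationOn γ (Set.Icc 0 x))
    (hb2 : ENNReal.ofReal r2 ≤ eVariationOn γ (Set.Icc x 1)) :
    ENNReal.ofReal (r1 + r2) ≤ eVariationOn γ (Set.Icc 0 1) := by
  rw [← evar_Icc_add hx0 hx1, ENNReal.ofReal_add h1 h2]
  exact add_le_add hb1 hb2

/-- Three-split lower bound. -/
lemma ofReal_three_split_le {γ : ℝ → Fin n → ℝ} {x y r1 r2 r3 : ℝ}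
    (hx0 : 0 ≤ x) (hxy : x ≤ y) (hy1 : y ≤ 1) (h1 : 0 ≤ r1) (h2 : 0 ≤ r2) (h3 : 0 ≤ r3)
    (hb1 : ENNReal.ofReal r1 ≤ eVariationOn γ (Set.Icc 0 x))
    (hb2 : ENNReal.ofReal r2 ≤ eVariationOn γ (Set.Icc x y))
    (hb3 : ENNReal.ofReal r3 ≤ eVariationOn γ (Set.Icc y 1)) :
    ENNReal.ofReal (r1 + r2 + r3) ≤ eVariationOn γ (Set.Icc 0 1) := by
  have hy0 : (0:ℝ) ≤ y := hx0.trans hxy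
  have e01 : eVariationOn γ (Set.Icc 0 x) + eVariationOn γ (Set.Icc x y)
      + eVariationOn γ (Set.Icc y 1) = eVariationOn γ (Set.Icc 0 1) := by
    rw [evar_Icc_add hx0 hxy, evar_Icc_add hy0 hy1]
  rw [ENNReal.ofReal_add (by linarith) h3, ENNReal.ofReal_add h1 h2, ← e01]
  exact add_le_add (add_le_add hb1 hb2) hb3

lemma sSup_range_fin_mem {p : ℕ} (hp : 1 ≤ p) (f : Fin p → ℝ) :
    sSup (Set.range f) ∈ Set.range f := by
  have : Nonempty (Fin p) := ⟨⟨0, hp⟩⟩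
  exact Set.Nonempty.csSup_mem (Set.range_nonempty f) (Set.finite_range f)

lemma le_sSup_range_fin {p : ℕ} (f : Fin p → ℝ) (t : Fin p) :
    f t ≤ sSup (Set.range f) :=
  le_csSup (Set.finite_range f).bddAbove (Set.mem_range_self t)

end Auxiliary

section LowerBound

variable {n : ℕ}

/-- A "visit" of the path to a face `x_idx = sgn`, pinned at the two times `t0 ≤ t1`. -/
structure GVisit (n : ℕ) where
  idx : Fin n
  sgn : ℝ
  t0 : ℝ
  t1 : ℝ

def GoodVisit (γ : ℝ → Fin n → ℝ) (v : GVisit n) : Prop :=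
  1 ≤ (v.idx : ℕ) ∧ (v.sgn = 1 ∨ v.sgn = -1) ∧ 0 ≤ v.t0 ∧ v.t0 ≤ v.t1 ∧ v.t1 ≤ 1 ∧
    γ v.t0 v.idx = v.sgn ∧ γ v.t1 v.idx = v.sgn

def GoodChain (γ : ℝ → Fin n → ℝ) (m : ℕ) (v : ℕ → GVisit n) : Prop :=
  (∀ k, k < m → GoodVisit γ (v k)) ∧ ∀ k, k + 1 < m → (v k).t1 = (v (k+1)).t0

def ChainWrap (γ : ℝ → Fin n → ℝ) (m : ℕ) (v : ℕ → GVisit n) : Prop :=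
  ∃ (j : Fin n) (sL sR : ℝ), 0 ≤ sL ∧ sL ≤ sR ∧ sR ≤ 1 ∧
    γ sL (v 0).idx = (v 0).sgn ∧ γ sR (v (m-1)).idx = (v (m-1)).sgn ∧
    |γ sL j - γ sR j| = 2

lemma chain_t0_mono {γ : ℝ → Fin n → ℝ} {m : ℕ} {v : ℕ → GVisit n}
    (h : GoodChain γ m v) : ∀ l, l < m → ∀ k, k ≤ l → (v k).t0 ≤ (v l).t0 := by
  intro l
  induction l with
  | zero =>
    intro _ k hk
    have hk0 : k = 0 := Nat.le_zero.mp hk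
    rw [hk0]
  | succ l ih =>
    intro hl k hk
    rcases Nat.eq_or_lt_of_le hk with rfl | hklt
    · exact le_rfl
    · have h1 : (v k).t0 ≤ (v l).t0 := ih (by omega) k (by omega)
      have h2 : (v l).t0 ≤ (v l).t1 := (h.1 l (by omega)).2.2.2.1
      have h3 : (v l).t1 = (v (l+1)).t0 := h.2 l hl
      linarith

lemma chainTerm_eq_wrap {p : ℕ} (A B : Fin n → ℝ) (c : Fin p → Fin n) (ε : Fin p → ℝ)
    (t : Fin p) (ht : (t : ℕ) = p - 1) :
    chainTerm A B c ε t = 4 + ε t * A (c t) +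
      ε ⟨0, by have := t.isLt; omega⟩ * B (c ⟨0, by have := t.isLt; omega⟩) := by
  unfold chainTerm
  rw [dif_pos ht]

lemma chainTerm_eq_mid {p : ℕ} (A B : Fin n → ℝ) (c : Fin p → Fin n) (ε : Fin p → ℝ)
    (t : Fin p) (ht : (t : ℕ) ≠ p - 1) :
    chainTerm A B c ε t = 2 + ε t * A (c t) +
      ε ⟨(t : ℕ) + 1, by have := t.isLt; omega⟩ *
        B (c ⟨(t : ℕ) + 1, by have := t.isLt; omega⟩) := by
  unfold chainTerm
  rw [dif_neg ht]

lemma chain_consume {A B : Fin n → ℝ} {γ : ℝ → Fin n → ℝ}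
    (hγ0 : γ 0 = A) (hγ1 : γ 1 = B)
    (hA : ∀ i, A i ∈ Set.Icc (-1:ℝ) 1) (hB : ∀ i, B i ∈ Set.Icc (-1:ℝ) 1)
    {m : ℕ} {v : ℕ → GVisit n} (hch : GoodChain γ m v) (hm : 1 ≤ m)
    (hinj : ∀ k l, k < l → l < m → (v k).idx ≠ (v l).idx)
    (hwrap : ChainWrap γ m v) :
    ∃ q ∈ SpSet n A B, ENNReal.ofReal q ≤ eVariationOn γ (Set.Icc 0 1) := by
  obtain ⟨hgv, hadj⟩ := hch
  have hidxlt : ∀ t : Fin m, m - 1 - (t : ℕ) < m := fun t => by have := t.isLt; omega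
  let c : Fin m → Fin n := fun t => (v (m - 1 - (t : ℕ))).idx
  let ε : Fin m → ℝ := fun t => -(v (m - 1 - (t : ℕ))).sgn
  -- membership facts
  have hpn : m ≤ n - 1 := by
    have h3 : ∀ t : Fin m, ((v (t : ℕ)).idx : ℕ) - 1 < n - 1 := by
      intro t
      have h1 : 1 ≤ ((v (t : ℕ)).idx : ℕ) := (hgv t t.isLt).1
      have h2 := (v (t : ℕ)).idx.isLt
      omega
    have hinj2 : Function.Injective (fun t : Fin m => (⟨((v (t : ℕ)).idx : ℕ) - 1, h3 t⟩ : Fin (n-1))) := by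
      intro a b hab
      have h1 : 1 ≤ ((v (a : ℕ)).idx : ℕ) := (hgv a a.isLt).1
      have h2 : 1 ≤ ((v (b : ℕ)).idx : ℕ) := (hgv b b.isLt).1
      have hv : ((v (a : ℕ)).idx : ℕ) = ((v (b : ℕ)).idx : ℕ) := by
        have := congrArg Fin.val hab
        simp only at this
        omega
      have hvv : (v (a : ℕ)).idx = (v (b : ℕ)).idx := Fin.ext hv
      rcases lt_trichotomy (a : ℕ) (b : ℕ) with h | h | h
      · exact absurd hvv (hinj _ _ h b.isLt)
      · exact Fin.ext h
      · exact absurd hvv.symm (hinj _ _ h a.isLt)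
    simpa using Fintype.card_le_of_injective _ hinj2
  have hcinj : Function.Injective c := by
    intro a b hab
    rcases lt_trichotomy (m - 1 - (a : ℕ)) (m - 1 - (b : ℕ)) with h | h | h
    · exact absurd hab (hinj _ _ h (hidxlt b))
    · have := a.isLt; have := b.isLt
      exact Fin.ext (by omega)
    · exact absurd hab.symm (hinj _ _ h (hidxlt a))
  have hc1 : ∀ t, 1 ≤ ((c t : ℕ)) := fun t => (hgv _ (hidxlt t)).1
  have hε : ∀ t, ε t = 1 ∨ ε t = -1 := by
    intro t
    rcases (hgv _ (hidxlt t)).2.1 with h | h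
    · right; simp [ε, h]
    · left; simp [ε, h]
  -- the term bound
  have hterm : ∀ t : Fin m, ENNReal.ofReal (chainTerm A B c ε t)
      ≤ eVariationOn γ (Set.Icc 0 1) := by
    intro t
    by_cases ht : (t : ℕ) = m - 1
    · -- wrap term
      rw [chainTerm_eq_wrap A B c ε t ht]
      obtain ⟨j, sL, sR, h0L, hLR, hR1, hpin0, hpinl, habs⟩ := hwrap
      have hk0 : m - 1 - (t : ℕ) = 0 := by omega
      have hklast : m - 1 - ((0 : ℕ)) = m - 1 := by omega
      have hct : c t = (v 0).idx := by simp only [c, hk0]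
      have hεt : ε t = -(v 0).sgn := by simp only [ε, hk0]
      have hc0 : c ⟨0, by have := t.isLt; omega⟩ = (v (m-1)).idx := by
        simp only [c]; rw [hklast]
      have hε0 : ε ⟨0, by have := t.isLt; omega⟩ = -(v (m-1)).sgn := by
        simp only [ε]; rw [hklast]
      rw [hct, hεt, hc0, hε0]
      have hs0 := (hgv 0 (by omega)).2.1
      have hsl := (hgv (m-1) (by omega)).2.1
      have heq : 4 + -(v 0).sgn * A ((v 0).idx) + -(v (m-1)).sgn * B ((v (m-1)).idx)
          = (1 - (v 0).sgn * A ((v 0).idx)) + 2 + (1 - (v (m-1)).sgn * B ((v (m-1)).idx)) := by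
        ring
      rw [heq]
      apply ofReal_three_split_le h0L hLR hR1
        (sgn_term_nonneg hs0 (hA _)) (by norm_num) (sgn_term_nonneg hsl (hB _))
      · refine le_trans (le_of_eq ?_) (ofReal_abs_le_evar γ h0L (v 0).idx)
        rw [hγ0, hpin0, abs_sgn_sub hs0 (hA _)]
      · refine le_trans (le_of_eq ?_) (ofReal_abs_le_evar γ hLR j)
        rw [abs_sub_comm] at habs
        rw [habs]
      · refine le_trans (le_of_eq ?_) (ofReal_abs_le_evar γ hR1 (v (m-1)).idx)
        rw [hγ1, hpinl, abs_sub_comm, abs_sgn_sub hsl (hB _)]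
    · -- middle term
      rw [chainTerm_eq_mid A B c ε t ht]
      have htlt := t.isLt
      set k := m - 1 - (t : ℕ) with hkdef
      have hk1 : 1 ≤ k := by omega
      have hkm : k < m := by omega
      have hknext : m - 1 - ((t : ℕ) + 1) = k - 1 := by omega
      have hct : c t = (v k).idx := rfl
      have hεt : ε t = -(v k).sgn := rfl
      have hc1' : c ⟨(t : ℕ) + 1, by omega⟩ = (v (k-1)).idx := by
        simp only [c]; rw [hknext]
      have hε1' : ε ⟨(t : ℕ) + 1, by omega⟩ = -(v (k-1)).sgn := by
        simp only [ε]; rw [hknext]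
      rw [hct, hεt, hc1', hε1']
      have hgk := hgv k hkm
      have hgk1 := hgv (k-1) (by omega)
      have hadjk : (v (k-1)).t1 = (v k).t0 := by
        have := hadj (k-1) (by omega)
        rwa [Nat.sub_add_cancel hk1] at this
      have hsk := hgk.2.1
      have hsk1 := hgk1.2.1
      have heq : 2 + -(v k).sgn * A ((v k).idx) + -(v (k-1)).sgn * B ((v (k-1)).idx)
          = (1 - (v k).sgn * A ((v k).idx)) + (1 - (v (k-1)).sgn * B ((v (k-1)).idx)) := by
        ring
      rw [heq]
      have hx0 : 0 ≤ (v k).t0 := hgk.2.2.1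
      have hx1 : (v k).t0 ≤ 1 := le_trans hgk.2.2.2.1 hgk.2.2.2.2.1
      apply ofReal_two_split_le hx0 hx1
        (sgn_term_nonneg hsk (hA _)) (sgn_term_nonneg hsk1 (hB _))
      · refine le_trans (le_of_eq ?_) (ofReal_abs_le_evar γ hx0 (v k).idx)
        rw [hγ0, hgk.2.2.2.2.2.1, abs_sgn_sub hsk (hA _)]
      · refine le_trans (le_of_eq ?_) (ofReal_abs_le_evar γ hx1 (v (k-1)).idx)
        rw [hγ1, ← hadjk, hgk1.2.2.2.2.2.2, abs_sub_comm, abs_sgn_sub hsk1 (hB _)]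
  -- assemble
  refine ⟨candidateLength A B c ε, ⟨m, c, ε, hm, hpn, hcinj, hc1, hε, rfl⟩, ?_⟩
  obtain ⟨t₀, ht₀⟩ := sSup_range_fin_mem hm (chainTerm A B c ε)
  rw [candidateLength, ← ht₀]
  exact hterm t₀

end LowerBound

section Reduce

variable {n : ℕ}

lemma chain_reduce {A B : Fin n → ℝ} {γ : ℝ → Fin n → ℝ}
    (hγ0 : γ 0 = A) (hγ1 : γ 1 = B)
    (hA : ∀ i, A i ∈ Set.Icc (-1:ℝ) 1) (hB : ∀ i, B i ∈ Set.Icc (-1:ℝ) 1) :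
    ∀ m : ℕ, ∀ v : ℕ → GVisit n, GoodChain γ m v → 1 ≤ m → ChainWrap γ m v →
    ∃ q ∈ SpSet n A B, ENNReal.ofReal q ≤ eVariationOn γ (Set.Icc 0 1) := by
  intro m
  induction m using Nat.strong_induction_on with
  | _ m IH =>
    intro v hch hm hwrap
    by_cases hinj : ∀ k l, k < l → l < m → (v k).idx ≠ (v l).idx
    · exact chain_consume hγ0 hγ1 hA hB hch hm hinj hwrap
    · push_neg at hinj
      obtain ⟨k, l, hkl, hlm, hidx⟩ := hinj
      obtain ⟨hgv, hadj⟩ := hch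
      by_cases hsgn : (v k).sgn = (v l).sgn
      · -- same sign: merge the repeated visits into one
        set d := l - k with hd
        have hd1 : 1 ≤ d := by omega
        set m' := m - d with hm'
        have hm'1 : k + 1 ≤ m' := by omega
        have hm'lt : m' < m := by omega
        set v' : ℕ → GVisit n := fun r =>
          if r < k then v r
          else if r = k then ⟨(v k).idx, (v k).sgn, (v k).t0, (v l).t1⟩
          else v (r + d) with hv'
        have hv'lt : ∀ r, r < k → v' r = v r := by
          intro r hr; simp [v', hr]
        have hv'k : v' k = ⟨(v k).idx, (v k).sgn, (v k).t0, (v l).t1⟩ := by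
          simp [v']
        have hv'gt : ∀ r, k < r → v' r = v (r + d) := by
          intro r hr
          simp [v', Nat.lt_asymm hr, Nat.ne_of_gt hr]
        have hface : (v l).idx = (v k).idx := hidx.symm
        have hmerged : GoodVisit γ (v' k) := by
          rw [hv'k]
          have hgk := hgv k (by omega)
          have hgl := hgv l hlm
          have ht0l : (v k).t0 ≤ (v l).t0 :=
            chain_t0_mono ⟨hgv, hadj⟩ l hlm k (le_of_lt hkl)
          refine ⟨hgk.1, hgk.2.1, hgk.2.2.1, ?_, hgl.2.2.2.2.1, hgk.2.2.2.2.2.1, ?_⟩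
          · exact le_trans ht0l hgl.2.2.2.1
          · show γ (v l).t1 (v k).idx = (v k).sgn
            rw [← hface, hsgn]
            exact hgl.2.2.2.2.2.2
        have hch' : GoodChain γ m' v' := by
          constructor
          · intro r hr
            rcases lt_trichotomy r k with h | h | h
            · rw [hv'lt r h]; exact hgv r (by omega)
            · rw [h]; exact hmerged
            · rw [hv'gt r h]; exact hgv (r + d) (by omega)
          · intro r hr
            rcases lt_trichotomy (r+1) k with h | h | h
            · rw [hv'lt r (by omega), hv'lt (r+1) h]
              exact hadj r (by omega)
            · rw [hv'lt r (by omega), h, hv'k]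
              show (v r).t1 = (v k).t0
              have h2 := hadj r (by omega)
              rwa [h] at h2
            · rcases lt_trichotomy r k with h2 | h2 | h2
              · omega
              · rw [h2, hv'k, hv'gt (k+1) (by omega)]
                show (v l).t1 = (v (k + 1 + d)).t0
                have hl1 : k + 1 + d = l + 1 := by omega
                rw [hl1]
                exact hadj l (by omega)
              · rw [hv'gt r h2, hv'gt (r+1) (by omega)]
                have : r + 1 + d = (r + d) + 1 := by omega
                rw [this]
                exact hadj (r + d) (by omega)
        have hwrap' : ChainWrap γ m' v' := by
          obtain ⟨j, sL, sR, h0L, hLR, hR1, hpin0, hpinl, habs⟩ := hwrap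
          have h0 : (v' 0).idx = (v 0).idx ∧ (v' 0).sgn = (v 0).sgn := by
            rcases Nat.eq_zero_or_pos k with hk0 | hk0
            · rw [← hk0, hv'k, hk0]; exact ⟨rfl, rfl⟩
            · rw [hv'lt 0 hk0]; exact ⟨rfl, rfl⟩
          have hlast : (v' (m'-1)).idx = (v (m-1)).idx ∧ (v' (m'-1)).sgn = (v (m-1)).sgn := by
            rcases lt_trichotomy (m'-1) k with h | h | h
            · omega
            · have hlm1 : l = m - 1 := by omega
              rw [h, hv'k]
              constructor
              · show (v k).idx = (v (m-1)).idx
                rw [← hlm1, hface]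
              · show (v k).sgn = (v (m-1)).sgn
                rw [← hlm1, hsgn]
            · rw [hv'gt _ h]
              have : m' - 1 + d = m - 1 := by omega
              rw [this]
              exact ⟨rfl, rfl⟩
          exact ⟨j, sL, sR, h0L, hLR, hR1, by rw [h0.1, h0.2]; exact hpin0,
            by rw [hlast.1, hlast.2]; exact hpinl, habs⟩
        exact IH m' hm'lt v' hch' (by omega) hwrap'
      · -- opposite sign: pass to the window between the two visits
        set m' := l - k with hm'
        have hm'1 : 1 ≤ m' := by omega
        have hm'lt : m' < m := by omega
        set v' : ℕ → GVisit n := fun r => v (k + 1 + r) with hv'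
        have hch' : GoodChain γ m' v' := by
          constructor
          · intro r hr
            exact hgv (k + 1 + r) (by omega)
          · intro r hr
            have : k + 1 + (r + 1) = (k + 1 + r) + 1 := by omega
            simp only [v']
            rw [this]
            exact hadj (k + 1 + r) (by omega)
        have hwrap' : ChainWrap γ m' v' := by
          have hgk := hgv k (by omega)
          have hgl := hgv l hlm
          have hadjk : (v k).t1 = (v (k+1)).t0 := hadj k (by omega)
          refine ⟨(v k).idx, (v k).t1, (v l).t0, ?_, ?_, ?_, ?_, ?_, ?_⟩
          · exact le_trans hgk.2.2.1 hgk.2.2.2.1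
          · rw [hadjk]
            exact chain_t0_mono ⟨hgv, hadj⟩ l hlm (k+1) (by omega)
          · exact le_trans hgl.2.2.2.1 hgl.2.2.2.2.1
          · show γ (v k).t1 (v' 0).idx = (v' 0).sgn
            have h0 : v' 0 = v (k+1) := by simp [v']
            rw [h0, hadjk]
            exact (hgv (k+1) (by omega)).2.2.2.2.2.1
          · show γ (v l).t0 (v' (m'-1)).idx = (v' (m'-1)).sgn
            have h1 : v' (m'-1) = v l := by
              simp only [v']
              congr 1
              omega
            rw [h1]
            exact hgl.2.2.2.2.2.1
          · have e1 : γ (v k).t1 (v k).idx = (v k).sgn := hgk.2.2.2.2.2.2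
            have e2 : γ (v l).t0 (v k).idx = (v l).sgn := by
              rw [hidx]
              exact hgl.2.2.2.2.2.1
            rw [e1, e2]
            rcases hgk.2.1 with h1 | h1 <;> rcases hgl.2.1 with h2 | h2
            · exact absurd (h1.trans h2.symm) hsgn
            · rw [h1, h2]; norm_num
            · rw [h1, h2]; norm_num
            · exact absurd (h1.trans h2.symm) hsgn
        exact IH m' hm'lt v' hch' hm'1 hwrap'

end Reduce

section Extraction

variable {n : ℕ}

/-- The value `±1` associated with a boolean. -/
def bval (b : Bool) : ℝ := if b then 1 else -1

lemma bval_pm (b : Bool) : bval b = 1 ∨ bval b = -1 := by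
  cases b <;> simp [bval]

lemma exists_pinned (hn : 3 ≤ n) {x : Fin n → ℝ} (hx : ‖x‖ = 1)
    (h0 : |x ⟨0, Nat.lt_of_lt_of_le (by norm_num) hn⟩| ≠ 1) :
    ∃ i : Fin n, 1 ≤ (i : ℕ) ∧ (x i = 1 ∨ x i = -1) := by
  have hne : Nonempty (Fin n) := ⟨⟨0, by omega⟩⟩
  obtain ⟨i, -, hi⟩ := Finset.exists_mem_eq_sup (Finset.univ)
    Finset.univ_nonempty (fun b => ‖x b‖₊)
  have habs : |x i| = 1 := by
    have h1 : ‖x‖ = ‖x i‖ := by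
      rw [Pi.norm_def, hi]
      exact coe_nnnorm _
    rw [← Real.norm_eq_abs, ← h1, hx]
  have hi0 : (i : ℕ) ≠ 0 := by
    intro h
    apply h0
    have : (⟨0, by omega⟩ : Fin n) = i := Fin.ext h.symm
    rw [this]
    exact habs
  exact ⟨i, by omega, (abs_eq (by norm_num : (0:ℝ) ≤ 1)).mp habs⟩

lemma K_closed {γ : ℝ → Fin n → ℝ} (hcont : ContinuousOn γ (Set.Icc 0 1))
    {a b : ℝ} (ha : 0 ≤ a) (hb : b ≤ 1) (i : Fin n) (s : ℝ) :
    IsClosed {t : ℝ | t ∈ Set.Icc a b ∧ γ t i = s} := by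
  have h1 : ContinuousOn (fun t => γ t i) (Set.Icc a b) :=
    ((continuous_apply i).comp_continuousOn hcont).mono (Set.Icc_subset_Icc ha hb)
  have h2 := h1.preimage_isClosed_of_isClosed isClosed_Icc
    (isClosed_singleton (x := s))
  have h3 : {t : ℝ | t ∈ Set.Icc a b ∧ γ t i = s}
      = Set.Icc a b ∩ (fun t => γ t i) ⁻¹' {s} := rfl
  rw [h3]
  exact h2

/-- The pin set of the face `(i, b)` inside `[T, T']`. -/
def Kset (γ : ℝ → Fin n → ℝ) (T T' : ℝ) (i : Fin n) (b : Bool) : Set ℝ :=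
  {t : ℝ | t ∈ Set.Icc T T' ∧ γ t i = bval b}

lemma exists_face {γ : ℝ → Fin n → ℝ} {T T' : ℝ}
    (hcont : ContinuousOn γ (Set.Icc 0 1)) (hT0 : 0 ≤ T) (hT'1 : T' ≤ 1)
    (pinao : ∀ t, T < t → t < T' → ∃ (i : Fin n) (b : Bool),
      1 ≤ (i : ℕ) ∧ γ t i = bval b)
    {x : ℝ} (hx1 : T ≤ x) (hx2 : x < T') :
    ∃ (i : Fin n) (b : Bool), 1 ≤ (i : ℕ) ∧ x ∈ Kset γ T T' i b ∧
      x < sSup (Kset γ T T' i b) := by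
  classical
  set tj : ℕ → ℝ := fun j => x + (T' - x) / (j + 2) with htj
  have htjx : ∀ j, x < tj j := by
    intro j
    have : (0:ℝ) < (T' - x) / (j + 2) := by
      apply div_pos (by linarith) (by positivity)
    simp only [tj]
    linarith
  have htjT' : ∀ j, tj j < T' := by
    intro j
    have h2 : (T' - x) / (j + 2) < T' - x := by
      apply div_lt_self (by linarith)
      have : (0:ℝ) ≤ (j:ℝ) := Nat.cast_nonneg j
      linarith
    simp only [tj]
    linarith
  have H : ∀ j : ℕ, ∃ (i : Fin n) (b : Bool), 1 ≤ (i : ℕ) ∧ γ (tj j) i = bval b := by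
    intro j
    exact pinao (tj j) (lt_of_le_of_lt hx1 (htjx j)) (htjT' j)
  choose fi fb h1 h2 using H
  obtain ⟨⟨i, b⟩, hfib⟩ := Finite.exists_infinite_fiber (fun j => (fi j, fb j))
  have hfib' : {j : ℕ | (fi j, fb j) = (i, b)}.Infinite := by
    rw [← Set.infinite_coe_iff]
    exact hfib
  have hmemK : ∀ j, (fi j, fb j) = (i, b) → tj j ∈ Kset γ T T' i b := by
    rintro j hj
    have hfi : fi j = i := congrArg Prod.fst hj
    have hfb : fb j = b := congrArg Prod.snd hj
    refine ⟨⟨le_trans hx1 (htjx j).le, (htjT' j).le⟩, ?_⟩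
    rw [← hfi, ← hfb]
    exact h2 j
  obtain ⟨j₀, hj₀⟩ := hfib'.nonempty
  have h1j : 1 ≤ ((i : Fin n) : ℕ) := by
    have := h1 j₀
    have hfi : fi j₀ = i := congrArg Prod.fst hj₀
    rwa [hfi] at this
  have hKclosed : IsClosed (Kset γ T T' i b) := K_closed hcont hT0 hT'1 i (bval b)
  have hKbdd : BddAbove (Kset γ T T' i b) :=
    (bddAbove_Icc (a := T) (b := T')).mono (fun t ht => ht.1)
  have hxK : x ∈ Kset γ T T' i b := by
    rw [← hKclosed.closure_eq]
    rw [Metric.mem_closure_iff]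
    intro ε hε
    obtain ⟨N, hN⟩ := exists_nat_gt ((T' - x) / ε)
    obtain ⟨j, hjmem, hjN⟩ := hfib'.exists_gt N
    refine ⟨tj j, hmemK j hjmem, ?_⟩
    rw [Real.dist_eq, abs_of_nonpos (by linarith [htjx j])]
    have hj2 : (T' - x) / ε < (j : ℝ) + 2 := by
      have : (N:ℝ) ≤ (j:ℝ) := Nat.cast_le.mpr (le_of_lt hjN)
      linarith
    have hpos : (0:ℝ) < (j:ℝ) + 2 := by positivity
    have : (T' - x) / ((j:ℝ) + 2) < ε := by
      rw [div_lt_iff₀ hpos, mul_comm]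
      calc T' - x = ((T' - x) / ε) * ε := by field_simp
        _ < ((j:ℝ) + 2) * ε := by
            apply mul_lt_mul_of_pos_right hj2 hε
    simp only [tj]
    linarith
  refine ⟨i, b, h1j, hxK, ?_⟩
  calc x < tj j₀ := htjx j₀
    _ ≤ sSup (Kset γ T T' i b) := le_csSup hKbdd (hmemK j₀ hj₀)

end Extraction

section Greedy

variable {n : ℕ}

lemma greedy_chain {γ : ℝ → Fin n → ℝ} {T T' : ℝ}
    (hcont : ContinuousOn γ (Set.Icc 0 1)) (hT0 : 0 ≤ T) (hT'1 : T' ≤ 1)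
    (pinao : ∀ t, T < t → t < T' → ∃ (i : Fin n) (b : Bool),
      1 ≤ (i : ℕ) ∧ γ t i = bval b) :
    ∀ fuel : ℕ, ∀ x : ℝ, T ≤ x → x < T' →
      ({F : Fin n × Bool | x < sSup (Kset γ T T' F.1 F.2)}).ncard ≤ fuel →
      ∃ (m : ℕ) (v : ℕ → GVisit n), GoodChain γ m v ∧ 1 ≤ m ∧
        (v 0).t0 = x ∧ (v (m-1)).t1 = T' := by
  intro fuel
  induction fuel with
  | zero =>
    intro x hx1 hx2 hcard
    obtain ⟨i, b, h1, hxK, hxsup⟩ := exists_face hcont hT0 hT'1 pinao hx1 hx2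
    exfalso
    have hFmem : ((i, b) : Fin n × Bool) ∈
        {F : Fin n × Bool | x < sSup (Kset γ T T' F.1 F.2)} := hxsup
    have : ({F : Fin n × Bool | x < sSup (Kset γ T T' F.1 F.2)}).ncard = 0 :=
      Nat.le_zero.mp hcard
    rw [Set.ncard_eq_zero (Set.toFinite _)] at this
    rw [this] at hFmem
    exact hFmem
  | succ fuel IH =>
    intro x hx1 hx2 hcard
    obtain ⟨i, b, h1, hxK, hxsup⟩ := exists_face hcont hT0 hT'1 pinao hx1 hx2
    set K := Kset γ T T' i b with hK
    have hKclosed : IsClosed K := K_closed hcont hT0 hT'1 i (bval b)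
    have hKbdd : BddAbove K := (bddAbove_Icc (a := T) (b := T')).mono (fun t ht => ht.1)
    have hKne : K.Nonempty := ⟨x, hxK⟩
    set y := sSup K with hy
    have hyK : y ∈ K := hKclosed.csSup_mem hKne hKbdd
    have hyT' : y ≤ T' := hyK.1.2
    have hxy : x < y := hxsup
    set v₀ : GVisit n := ⟨i, bval b, x, y⟩ with hv₀
    have hgv₀ : GoodVisit γ v₀ := by
      refine ⟨h1, bval_pm b, by linarith, hxy.le, by linarith, hxK.2, hyK.2⟩
    by_cases hyeq : y = T'
    · refine ⟨1, fun _ => v₀, ⟨fun k _ => hgv₀, fun k hk => absurd hk (by omega)⟩,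
        le_refl 1, rfl, ?_⟩
      show v₀.t1 = T'
      exact hyeq
    · have hylt : y < T' := lt_of_le_of_ne hyT' hyeq
      have hcard' : ({F : Fin n × Bool | y < sSup (Kset γ T T' F.1 F.2)}).ncard ≤ fuel := by
        have hss : {F : Fin n × Bool | y < sSup (Kset γ T T' F.1 F.2)} ⊂
            {F : Fin n × Bool | x < sSup (Kset γ T T' F.1 F.2)} := by
          constructor
          · intro F hF
            exact lt_trans hxy hF
          · intro hsub
            have : ((i, b) : Fin n × Bool) ∈
                {F : Fin n × Bool | y < sSup (Kset γ T T' F.1 F.2)} → False := by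
              intro hmem
              exact lt_irrefl y hmem
            exact this (hsub hxsup)
        have := Set.ncard_lt_ncard hss (Set.toFinite _)
        omega
      obtain ⟨m, w, hch, hm1, hw0, hwlast⟩ := IH y (le_trans hx1 hxy.le) hylt hcard'
      refine ⟨m + 1, fun r => if r = 0 then v₀ else w (r-1), ⟨?_, ?_⟩, by omega, by simp [hv₀], ?_⟩
      · intro k hk
        by_cases hk0 : k = 0
        · simp [hk0, hgv₀]
        · simp only [if_neg hk0]
          exact hch.1 (k-1) (by omega)
      · intro k hk
        by_cases hk0 : k = 0
        · subst hk0
          simp only [if_pos rfl, if_neg (by omega : (0:ℕ) + 1 ≠ 0)]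
          show v₀.t1 = (w (0 + 1 - 1)).t0
          rw [(by omega : (0:ℕ) + 1 - 1 = 0), hw0]
        · simp only [if_neg hk0, if_neg (by omega : k + 1 ≠ 0)]
          have hre : k + 1 - 1 = (k - 1) + 1 := by omega
          rw [hre]
          exact hch.2 (k-1) (by omega)
      · simp only [if_neg (by omega : m + 1 - 1 ≠ 0)]
        have : m + 1 - 1 - 1 = m - 1 := by omega
        rw [this]
        exact hwlast

end Greedy

section LowerFinal

variable {n : ℕ}

lemma lower_bound (hn : 3 ≤ n) {A B : Fin n → ℝ}
    (hA1 : A ⟨0, Nat.lt_of_lt_of_le (by norm_num) hn⟩ = 1) (hB1 : B ⟨0, Nat.lt_of_lt_of_le (by norm_num) hn⟩ = -1)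
    (hA : ∀ i, A i ∈ Set.Icc (-1:ℝ) 1) (hB : ∀ i, B i ∈ Set.Icc (-1:ℝ) 1)
    {γ : ℝ → Fin n → ℝ} (hcont : ContinuousOn γ (Set.Icc 0 1))
    (hγ0 : γ 0 = A) (hγ1 : γ 1 = B) (hnorm : ∀ t ∈ Set.Icc (0:ℝ) 1, ‖γ t‖ = 1) :
    ENNReal.ofReal (sInf (SpSet n A B)) ≤ eVariationOn γ (Set.Icc 0 1) := by
  set i0 : Fin n := ⟨0, by omega⟩ with hi0
  set S1 : Set ℝ := {t | t ∈ Set.Icc (0:ℝ) 1 ∧ γ t i0 = 1} with hS1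
  have hS1closed : IsClosed S1 := K_closed hcont le_rfl le_rfl i0 1
  have h0S1 : (0:ℝ) ∈ S1 := ⟨⟨le_rfl, zero_le_one⟩, by rw [hγ0]; exact hA1⟩
  have hS1bdd : BddAbove S1 := bddAbove_Icc.mono (fun t ht => ht.1)
  set T := sSup S1 with hT
  have hTS1 : T ∈ S1 := hS1closed.csSup_mem ⟨0, h0S1⟩ hS1bdd
  have hT0 : 0 ≤ T := hTS1.1.1
  have hT1 : T ≤ 1 := hTS1.1.2
  have hTle : ∀ t, t ∈ S1 → t ≤ T := fun t ht => le_csSup hS1bdd ht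
  set S2 : Set ℝ := {t | t ∈ Set.Icc T 1 ∧ γ t i0 = -1} with hS2
  have hS2closed : IsClosed S2 := K_closed hcont hT0 le_rfl i0 (-1)
  have h1S2 : (1:ℝ) ∈ S2 := ⟨⟨hT1, le_rfl⟩, by rw [hγ1]; exact hB1⟩
  have hS2bdd : BddBelow S2 := bddBelow_Icc.mono (fun t ht => ht.1)
  set T' := sInf S2 with hT'
  have hT'S2 : T' ∈ S2 := hS2closed.csInf_mem ⟨1, h1S2⟩ hS2bdd
  have hT'ge : T ≤ T' := hT'S2.1.1
  have hT'1 : T' ≤ 1 := hT'S2.1.2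
  have hT'le : ∀ t, t ∈ S2 → T' ≤ t := fun t ht => csInf_le hS2bdd ht
  have hγT : γ T i0 = 1 := hTS1.2
  have hγT' : γ T' i0 = -1 := hT'S2.2
  have hTT' : T < T' := by
    rcases lt_or_eq_of_le hT'ge with h | h
    · exact h
    · exfalso
      rw [← h] at hγT'
      rw [hγT] at hγT'
      norm_num at hγT'
  have pinao : ∀ t, T < t → t < T' → ∃ (i : Fin n) (b : Bool),
      1 ≤ (i : ℕ) ∧ γ t i = bval b := by
    intro t ht1 ht2
    have htI : t ∈ Set.Icc (0:ℝ) 1 := ⟨le_trans hT0 ht1.le, le_trans ht2.le hT'1⟩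
    have hne1 : γ t i0 ≠ 1 := by
      intro h
      have hmem : t ∈ S1 := ⟨htI, h⟩
      have := hTle t hmem
      linarith
    have hne2 : γ t i0 ≠ -1 := by
      intro h
      have hmem : t ∈ S2 := ⟨⟨ht1.le, htI.2⟩, h⟩
      have := hT'le t hmem
      linarith
    have habs : |γ t i0| ≠ 1 := by
      intro h
      rcases (abs_eq (by norm_num : (0:ℝ) ≤ 1)).mp h with h' | h'
      · exact hne1 h'
      · exact hne2 h'
    obtain ⟨i, hi1, hipm⟩ := exists_pinned hn (hnorm t htI) habs
    rcases hipm with h | h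
    · exact ⟨i, true, hi1, by simpa [bval] using h⟩
    · exact ⟨i, false, hi1, by simpa [bval] using h⟩
  obtain ⟨m, v, hch, hm1, hv0, hvlast⟩ := greedy_chain hcont hT0 hT'1 pinao
    ((Set.univ : Set (Fin n × Bool)).ncard) T le_rfl hTT'
    (Set.ncard_le_ncard (Set.subset_univ _) Set.finite_univ)
  have hwrap : ChainWrap γ m v := by
    refine ⟨i0, T, T', hT0, hTT'.le, hT'1, ?_, ?_, ?_⟩
    · rw [← hv0]
      exact (hch.1 0 (by omega)).2.2.2.2.2.1
    · rw [← hvlast]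
      exact (hch.1 (m-1) (by omega)).2.2.2.2.2.2
    · rw [hγT, hγT']
      norm_num
  obtain ⟨q, hqmem, hqle⟩ := chain_reduce hγ0 hγ1 hA hB m v hch hm1 hwrap
  refine le_trans (ENNReal.ofReal_le_ofReal ?_) hqle
  exact csInf_le (SpSet_finite A B).bddBelow hqmem

end LowerFinal

section PathPieces

variable {n : ℕ}

/-- Lipschitz bound for the variation on an interval. -/
lemma lipschitz_evar_le {f : ℝ → (Fin n → ℝ)} {K : ℝ} (hK : 0 ≤ K)
    (hf : ∀ s t : ℝ, dist (f s) (f t) ≤ K * dist s t) {a b : ℝ} (hab : a ≤ b) :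
    eVariationOn f (Set.Icc a b) ≤ ENNReal.ofReal (K * (b - a)) := by
  apply iSup_le
  rintro ⟨m, u, hu, us⟩
  have key : ∀ i ∈ Finset.range m, edist (f (u (i+1))) (f (u i))
      ≤ ENNReal.ofReal (K * (u (i+1) - u i)) := by
    intro i _
    rw [edist_dist]
    apply ENNReal.ofReal_le_ofReal
    calc dist (f (u (i+1))) (f (u i)) ≤ K * dist (u (i+1)) (u i) := hf _ _
      _ = K * (u (i+1) - u i) := by
          rw [Real.dist_eq, abs_of_nonneg (by linarith [hu (Nat.le_succ i)])]
  calc ∑ i ∈ Finset.range m, edist (f (u (i+1))) (f (u i))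
      ≤ ∑ i ∈ Finset.range m, ENNReal.ofReal (K * (u (i+1) - u i)) :=
        Finset.sum_le_sum key
    _ = ENNReal.ofReal (∑ i ∈ Finset.range m, (K * (u (i+1) - u i))) := by
        rw [ENNReal.ofReal_sum_of_nonneg]
        intro i _
        have := hu (Nat.le_succ i)
        nlinarith
    _ ≤ ENNReal.ofReal (K * (b - a)) := by
        apply ENNReal.ofReal_le_ofReal
        have htel : ∑ i ∈ Finset.range m, (u (i+1) - u i) = u m - u 0 :=
          Finset.sum_range_sub u m
        rw [← Finset.mul_sum, htel]
        have h1 : u m - u 0 ≤ b - a := by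
          have := (us m).1
          have := (us m).2
          have := (us 0).1
          have := (us 0).2
          linarith
        nlinarith

/-- The basic 1-Lipschitz "rise, plateau, descend" profile. -/
def wfun (a' b' e' : ℝ) (t : ℝ) : ℝ := min (min (a' + t) 1) (max (1 + e' - t) b')

lemma wfun_lipschitz (a' b' e' : ℝ) : LipschitzWith 1 (wfun a' b' e') := by
  have h1 : LipschitzWith 1 (fun t : ℝ => a' + t) := by
    apply LipschitzWith.of_dist_le_mul
    intro x y
    rw [Real.dist_eq, Real.dist_eq, NNReal.coe_one, one_mul]
    have : a' + x - (a' + y) = x - y := by ring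
    rw [this]
  have h2 : LipschitzWith 1 (fun t : ℝ => 1 + e' - t) := by
    apply LipschitzWith.of_dist_le_mul
    intro x y
    rw [Real.dist_eq, Real.dist_eq, NNReal.coe_one, one_mul]
    have : 1 + e' - x - (1 + e' - y) = -(x - y) := by ring
    rw [this, abs_neg]
  have := (h1.min_const 1).min (h2.max_const b')
  exact (by simpa using this : LipschitzWith 1 (fun x : ℝ => min (min (a' + x) 1) (max (1 + e' - x) b')))

lemma wfun_zero {a' b' e' : ℝ} (ha : a' ≤ 1) (hb : b' ≤ 1) (he : 0 ≤ e') :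
    wfun a' b' e' 0 = a' := by
  unfold wfun
  rw [add_zero, min_eq_left ha, sub_zero, max_eq_left (by linarith), min_eq_left (by linarith)]

lemma wfun_end {a' b' e' M' : ℝ} (ha1 : -1 ≤ a') (hb : b' ≤ 1) (hM2 : 2 ≤ M')
    (hbe : e' + (1 - b') ≤ M') :
    wfun a' b' e' M' = b' := by
  unfold wfun
  have e1 : min (a' + M') 1 = 1 := min_eq_right (by linarith)
  have e2 : max (1 + e' - M') b' = b' := max_eq_right (by linarith)
  rw [e1, e2, min_eq_right hb]

lemma wfun_pin {a' b' e' s' t : ℝ} (h1 : 1 - a' ≤ s') (hs : s' ≤ t) (hte : t ≤ e') :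
    wfun a' b' e' t = 1 := by
  unfold wfun
  have e1 : min (a' + t) 1 = 1 := min_eq_right (by linarith)
  rw [e1]
  exact min_eq_left (le_trans (by linarith : (1:ℝ) ≤ 1 + e' - t) (le_max_left _ _))

lemma wfun_le_one (a' b' e' t : ℝ) : wfun a' b' e' t ≤ 1 :=
  le_trans (min_le_left _ _) (min_le_right _ _)

lemma wfun_ge_neg_one {a' b' e' t : ℝ} (ha1 : -1 ≤ a') (hb1 : -1 ≤ b') (ht : 0 ≤ t) :
    -1 ≤ wfun a' b' e' t := by
  apply le_min
  · exact le_min (by linarith) (by norm_num)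
  · exact le_trans hb1 (le_max_right _ _)

lemma lipschitz_sgn_mul {δ : ℝ} (hδ : δ = 1 ∨ δ = -1) {f : ℝ → ℝ}
    (hf : LipschitzWith 1 f) : LipschitzWith 1 (fun t => δ * f t) := by
  apply LipschitzWith.of_dist_le_mul
  intro x y
  have habs : |δ| = 1 := by rcases hδ with rfl | rfl <;> norm_num
  rw [Real.dist_eq, NNReal.coe_one, one_mul]
  have : δ * f x - δ * f y = δ * (f x - f y) := by ring
  rw [this, abs_mul, habs, one_mul, ← Real.dist_eq]
  exact (hf.dist_le_mul x y).trans (by rw [NNReal.coe_one, one_mul])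

lemma one_add_sgn_nonneg {s a : ℝ} (hs : s = 1 ∨ s = -1) (ha : a ∈ Set.Icc (-1:ℝ) 1) :
    0 ≤ 1 + s * a := by
  rcases hs with rfl | rfl
  · linarith [ha.1]
  · linarith [ha.2]

lemma one_add_sgn_le_two {s a : ℝ} (hs : s = 1 ∨ s = -1) (ha : a ∈ Set.Icc (-1:ℝ) 1) :
    1 + s * a ≤ 2 := by
  rcases hs with rfl | rfl
  · linarith [ha.2]
  · linarith [ha.1]

end PathPieces

section Sched

variable {n : ℕ}

/-- The arrival sequence (in time order) of a chain: `AAseq A c ε hp k` is the distance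
that the coordinate pinned `k`-th (in time order) has to travel from its initial value. -/
noncomputable def AAseq {n : ℕ} (A : Fin n → ℝ) {p : ℕ} (c : Fin p → Fin n)
    (ε : Fin p → ℝ) (hp : 1 ≤ p) : ℕ → ℝ :=
  fun k => 1 + ε ⟨p - 1 - k, by omega⟩ * A (c ⟨p - 1 - k, by omega⟩)

lemma sgn_mul_mem {δ a : ℝ} (hδ : δ = 1 ∨ δ = -1) (ha : a ∈ Set.Icc (-1:ℝ) 1) :
    δ * a ∈ Set.Icc (-1:ℝ) 1 := by
  rcases hδ with rfl | rfl
  · simpa using ha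
  · constructor
    · have := ha.2; nlinarith
    · have := ha.1; nlinarith

lemma AAseq_nonneg {A : Fin n → ℝ} {p : ℕ} {c : Fin p → Fin n} {ε : Fin p → ℝ}
    (hp : 1 ≤ p) (hA : ∀ i, A i ∈ Set.Icc (-1:ℝ) 1) (hε : ∀ t, ε t = 1 ∨ ε t = -1)
    (k : ℕ) : 0 ≤ AAseq A c ε hp k :=
  one_add_sgn_nonneg (hε _) (hA _)

lemma AAseq_le_two {A : Fin n → ℝ} {p : ℕ} {c : Fin p → Fin n} {ε : Fin p → ℝ}
    (hp : 1 ≤ p) (hA : ∀ i, A i ∈ Set.Icc (-1:ℝ) 1) (hε : ∀ t, ε t = 1 ∨ ε t = -1)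
    (k : ℕ) : AAseq A c ε hp k ≤ 2 :=
  one_add_sgn_le_two (hε _) (hA _)

lemma AAseq_term {A B : Fin n → ℝ} {p : ℕ} {c : Fin p → Fin n} {ε : Fin p → ℝ}
    (hp : 1 ≤ p) {k : ℕ} (hk1 : 1 ≤ k) (hk2 : k ≤ p - 1) :
    AAseq A c ε hp k + AAseq B c ε hp (k-1) ≤ candidateLength A B c ε := by
  have hp2 : 2 ≤ p := by omega
  have pf1 : p - 1 - k < p := by omega
  have pf2 : p - 1 - (k-1) < p := by omega
  have ht : ((⟨p - 1 - k, pf1⟩ : Fin p) : ℕ) ≠ p - 1 := by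
    show p - 1 - k ≠ p - 1
    omega
  have hterm := chainTerm_eq_mid A B c ε ⟨p - 1 - k, pf1⟩ ht
  have hidx : (⟨((⟨p - 1 - k, pf1⟩ : Fin p) : ℕ) + 1,
      by have := (⟨p - 1 - k, pf1⟩ : Fin p).isLt; omega⟩ : Fin p) = ⟨p - 1 - (k-1), pf2⟩ := by
    apply Fin.ext
    show p - 1 - k + 1 = p - 1 - (k - 1)
    omega
  rw [hidx] at hterm
  refine le_trans (le_of_eq ?_) (le_sSup_range_fin _ ⟨p - 1 - k, pf1⟩)
  rw [hterm]
  show (1 + ε ⟨p-1-k, pf1⟩ * A (c ⟨p-1-k, pf1⟩))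
      + (1 + ε ⟨p-1-(k-1), pf2⟩ * B (c ⟨p-1-(k-1), pf2⟩))
    = 2 + ε ⟨p-1-k, pf1⟩ * A (c ⟨p-1-k, pf1⟩)
      + ε ⟨p-1-(k-1), pf2⟩ * B (c ⟨p-1-(k-1), pf2⟩)
  ring

lemma AAseq_wrap {A B : Fin n → ℝ} {p : ℕ} {c : Fin p → Fin n} {ε : Fin p → ℝ}
    (hp : 1 ≤ p) :
    AAseq A c ε hp 0 + 2 + AAseq B c ε hp (p-1) ≤ candidateLength A B c ε := by
  have pf0 : p - 1 < p := by omega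
  have pfl : p - 1 - (p-1) < p := by omega
  have pfz : p - 1 - 0 < p := by omega
  have ht : ((⟨p - 1, pf0⟩ : Fin p) : ℕ) = p - 1 := rfl
  have hterm := chainTerm_eq_wrap A B c ε ⟨p - 1, pf0⟩ ht
  have hidx : (⟨0, by have := (⟨p - 1, pf0⟩ : Fin p).isLt; omega⟩ : Fin p)
      = ⟨p - 1 - (p-1), pfl⟩ := by
    apply Fin.ext
    show 0 = p - 1 - (p - 1)
    omega
  rw [hidx] at hterm
  refine le_trans (le_of_eq ?_) (le_sSup_range_fin _ ⟨p - 1, pf0⟩)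
  rw [hterm]
  have hz : (⟨p - 1 - 0, pfz⟩ : Fin p) = ⟨p - 1, pf0⟩ := rfl
  show (1 + ε ⟨p-1-0, pfz⟩ * A (c ⟨p-1-0, pfz⟩)) + 2
      + (1 + ε ⟨p-1-(p-1), pfl⟩ * B (c ⟨p-1-(p-1), pfl⟩))
    = 4 + ε ⟨p-1, pf0⟩ * A (c ⟨p-1, pf0⟩)
      + ε ⟨p-1-(p-1), pfl⟩ * B (c ⟨p-1-(p-1), pfl⟩)
  rw [hz]
  ring

end Sched

section BuildPath

variable {n : ℕ}

lemma AAseq_at {A : Fin n → ℝ} {p : ℕ} {c : Fin p → Fin n} {ε : Fin p → ℝ}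
    (hp : 1 ≤ p) (u : Fin p) :
    AAseq A c ε hp (p - 1 - (u:ℕ)) = 1 + ε u * A (c u) := by
  have h : (⟨p - 1 - (p - 1 - (u:ℕ)), by omega⟩ : Fin p) = u := by
    apply Fin.ext
    show p - 1 - (p - 1 - (u:ℕ)) = (u:ℕ)
    have := u.isLt
    omega
  show 1 + ε ⟨p - 1 - (p - 1 - (u:ℕ)), by omega⟩ * A (c ⟨p - 1 - (p - 1 - (u:ℕ)), by omega⟩)
      = 1 + ε u * A (c u)
  rw [h]

lemma build_path (hn : 3 ≤ n) {A B : Fin n → ℝ}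
    (hA1 : A ⟨0, Nat.lt_of_lt_of_le (by norm_num) hn⟩ = 1) (hB1 : B ⟨0, Nat.lt_of_lt_of_le (by norm_num) hn⟩ = -1)
    (hA : ∀ i, A i ∈ Set.Icc (-1:ℝ) 1) (hB : ∀ i, B i ∈ Set.Icc (-1:ℝ) 1)
    {p : ℕ} (c : Fin p → Fin n) (ε : Fin p → ℝ) (hp : 1 ≤ p)
    (hcinj : Function.Injective c) (hc1 : ∀ t, 1 ≤ ((c t : ℕ)))
    (hε : ∀ t, ε t = 1 ∨ ε t = -1)
    (hsched : ∀ j k : ℕ, j ≤ k → k + 1 ≤ p - 1 →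
      AAseq A c ε hp j + AAseq B c ε hp k ≤ candidateLength A B c ε) :
    geoDist A B ≤ ENNReal.ofReal (candidateLength A B c ε) := by
  classical
  set M := candidateLength A B c ε with hMdef
  set AA := AAseq A c ε hp with hAAdef
  set DD := AAseq B c ε hp with hDDdef
  have hAAnn : ∀ k, 0 ≤ AA k := AAseq_nonneg hp hA hε
  have hAA2 : ∀ k, AA k ≤ 2 := AAseq_le_two hp hA hε
  have hDDnn : ∀ k, 0 ≤ DD k := AAseq_nonneg hp hB hε
  have hDD2 : ∀ k, DD k ≤ 2 := AAseq_le_two hp hB hε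
  have hterm : ∀ k, 1 ≤ k → k ≤ p - 1 → AA k + DD (k-1) ≤ M :=
    fun k h1 h2 => AAseq_term hp h1 h2
  have hwrap : AA 0 + 2 + DD (p-1) ≤ M := AAseq_wrap hp
  have hM2 : 2 ≤ M := by have := hAAnn 0; have := hDDnn (p-1); linarith
  have hM0 : 0 < M := by linarith
  -- the schedule
  let s : ℕ → ℝ := fun k => Nat.rec (AA 0) (fun k' ih => max ih (AA (k'+1))) k
  have hs0 : s 0 = AA 0 := rfl
  have hssucc : ∀ k, s (k+1) = max (s k) (AA (k+1)) := fun _ => rfl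
  have hsmono : ∀ j k, j ≤ k → s j ≤ s k := by
    intro j k hjk
    induction k with
    | zero => rw [Nat.le_zero.mp hjk]
    | succ k ih =>
      rcases Nat.eq_or_lt_of_le hjk with h | h
      · rw [h]
      · exact le_trans (ih (by omega)) (by rw [hssucc]; exact le_max_left _ _)
  have hsAA : ∀ k, AA k ≤ s k := by
    intro k
    cases k with
    | zero => exact le_of_eq hs0.symm
    | succ k => rw [hssucc]; exact le_max_right _ _
  have hsle : ∀ k X, (∀ j, j ≤ k → AA j ≤ X) → s k ≤ X := by
    intro k
    induction k with
    | zero => intro X h; rw [hs0]; exact h 0 le_rfl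
    | succ k ih =>
      intro X h
      rw [hssucc]
      exact max_le (ih X fun j hj => h j (by omega)) (h (k+1) le_rfl)
  have hsnn : ∀ k, 0 ≤ s k := fun k => le_trans (hAAnn k) (hsAA k)
  have hsb : ∀ k, s k ≤ s 0 + 2 := by
    intro k
    apply hsle
    intro j hj
    have h1 := hAA2 j
    have h2 := hAAnn 0
    rw [hs0]
    linarith
  let e : ℕ → ℝ := fun k => if k = p - 1 then s 0 + 2 else s (k+1)
  have he_last : e (p-1) = s 0 + 2 := if_pos rfl
  have he_mid : ∀ k, k ≠ p-1 → e k = s (k+1) := fun k h => if_neg h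
  have hse : ∀ k, s k ≤ e k := by
    intro k
    by_cases h : k = p - 1
    · rw [h, he_last]; exact hsb _
    · rw [he_mid k h]; exact hsmono k (k+1) (by omega)
  have hedead : ∀ k, k ≤ p - 1 → e k + DD k ≤ M := by
    intro k hk
    by_cases h : k = p - 1
    · rw [h, he_last, hs0]
      linarith
    · rw [he_mid k h]
      have hk1 : k + 1 ≤ p - 1 := by omega
      have hX : s (k+1) ≤ M - DD k := by
        refine hsle (k+1) (M - DD k) ?_
        intro j hj
        rcases Nat.eq_or_lt_of_le hj with h' | h'
        · have hterm' := hterm (k+1) (by omega) hk1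
          have hsub : k + 1 - 1 = k := by omega
          rw [hsub] at hterm'
          rw [h']
          linarith
        · have := hsched j k (by omega) hk1
          linarith
      linarith
  have hs0M : s 0 + 2 ≤ M := by
    rw [hs0]
    have := hDDnn (p-1)
    linarith
  have henn : ∀ k, 0 ≤ e k := fun k => le_trans (hsnn k) (hse k)
  -- sign facts
  have hδpm : ∀ u : Fin p, -(ε u) = 1 ∨ -(ε u) = -1 := by
    intro u
    rcases hε u with h | h
    · right; rw [h]
    · left; rw [h]; ring
  have hδsq : ∀ u : Fin p, (-(ε u)) * (-(ε u)) = 1 := by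
    intro u
    rcases hε u with h | h <;> rw [h] <;> ring
  have hfaceA : ∀ u : Fin p, AA (p - 1 - (u:ℕ)) = 1 - (-(ε u)) * A (c u) := by
    intro u
    rw [hAAdef, AAseq_at hp u]
    ring
  have hfaceB : ∀ u : Fin p, DD (p - 1 - (u:ℕ)) = 1 - (-(ε u)) * B (c u) := by
    intro u
    rw [hDDdef, AAseq_at hp u]
    ring
  -- the path, in arclength parametrization on [0, M]
  set π : ℝ → Fin n → ℝ := fun t i =>
    if (i : ℕ) = 0 then max (min (1 + s 0 - t) 1) (-1)
    else if hu : ∃ u : Fin p, c u = i then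
      (-(ε hu.choose)) * wfun ((-(ε hu.choose)) * A i) ((-(ε hu.choose)) * B i)
        (e (p - 1 - ((hu.choose : Fin p) : ℕ))) t
    else A i + (B i - A i) * (t / M) with hπdef
  have hπ0 : ∀ t, π t ⟨0, by omega⟩ = max (min (1 + s 0 - t) 1) (-1) := by
    intro t
    simp only [hπdef]
    simp
  have hπu : ∀ (u : Fin p) (t : ℝ), π t (c u)
      = (-(ε u)) * wfun ((-(ε u)) * A (c u)) ((-(ε u)) * B (c u)) (e (p - 1 - (u:ℕ))) t := by
    intro u t
    have hne : ¬ (((c u) : ℕ) = 0) := by have := hc1 u; omega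
    have hex : ∃ u', c u' = c u := ⟨u, rfl⟩
    have hch : hex.choose = u := hcinj hex.choose_spec
    simp only [hπdef]
    rw [if_neg hne, dif_pos hex, hch]
  have hπlin : ∀ (i : Fin n) (t : ℝ), ¬((i:ℕ) = 0) → ¬(∃ u, c u = i) →
      π t i = A i + (B i - A i) * (t / M) := by
    intro i t h1 h2
    simp only [hπdef]
    rw [if_neg h1, dif_neg h2]
  -- endpoints
  have hπstart : π 0 = A := by
    funext i
    by_cases h0 : (i:ℕ) = 0
    · have hieq : i = ⟨0, by omega⟩ := Fin.ext h0
      rw [hieq, hπ0, hA1, sub_zero]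
      rw [min_eq_right (by linarith [hsnn 0] : (1:ℝ) ≤ 1 + s 0)]
      exact max_eq_left (by norm_num)
    · by_cases hu : ∃ u, c u = i
      · obtain ⟨u, rfl⟩ := hu
        rw [hπu u 0]
        rw [wfun_zero (sgn_mul_mem (hδpm u) (hA _)).2 (sgn_mul_mem (hδpm u) (hB _)).2
          (henn _)]
        rw [← mul_assoc, hδsq u, one_mul]
      · rw [hπlin i 0 h0 hu, zero_div, mul_zero, add_zero]
  have hπend : π M = B := by
    funext i
    by_cases h0 : (i:ℕ) = 0
    · have hieq : i = ⟨0, by omega⟩ := Fin.ext h0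
      rw [hieq, hπ0, hB1]
      rw [min_eq_left (by linarith : 1 + s 0 - M ≤ 1)]
      exact max_eq_right (by linarith : 1 + s 0 - M ≤ -1)
    · by_cases hu : ∃ u, c u = i
      · obtain ⟨u, rfl⟩ := hu
        rw [hπu u M]
        have hbe : e (p - 1 - (u:ℕ)) + (1 - (-(ε u)) * B (c u)) ≤ M := by
          rw [← hfaceB u]
          exact hedead _ (by omega)
        rw [wfun_end (sgn_mul_mem (hδpm u) (hA _)).1 (sgn_mul_mem (hδpm u) (hB _)).2
          hM2 hbe]
        rw [← mul_assoc, hδsq u, one_mul]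
      · rw [hπlin i M h0 hu, div_self (ne_of_gt hM0), mul_one]
        ring
  -- range bound
  have habs : ∀ t, 0 ≤ t → t ≤ M → ∀ i, |π t i| ≤ 1 := by
    intro t ht0 htM i
    by_cases h0 : (i:ℕ) = 0
    · have hieq : i = ⟨0, by omega⟩ := Fin.ext h0
      rw [hieq, hπ0, abs_le]
      exact ⟨le_max_right _ _, max_le (le_trans (min_le_right _ _) le_rfl) (by norm_num)⟩
    · by_cases hu : ∃ u, c u = i
      · obtain ⟨u, rfl⟩ := hu
        rw [hπu u t]
        have h1 : |(-(ε u))| = 1 := by rcases hδpm u with h | h <;> rw [h] <;> norm_num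
        rw [abs_mul, h1, one_mul, abs_le]
        exact ⟨wfun_ge_neg_one (sgn_mul_mem (hδpm u) (hA _)).1
          (sgn_mul_mem (hδpm u) (hB _)).1 ht0, wfun_le_one _ _ _ _⟩
      · rw [hπlin i t h0 hu]
        have hθ0 : 0 ≤ t / M := div_nonneg ht0 hM0.le
        have hθ1 : t / M ≤ 1 := (div_le_one hM0).mpr htM
        rw [abs_le]
        constructor
        · nlinarith [mul_nonneg (by linarith [(hA i).1] : (0:ℝ) ≤ 1 + A i)
            (by linarith : (0:ℝ) ≤ 1 - t / M),
            mul_nonneg (by linarith [(hB i).1] : (0:ℝ) ≤ 1 + B i) hθ0]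
        · nlinarith [mul_nonneg (by linarith [(hA i).2] : (0:ℝ) ≤ 1 - A i)
            (by linarith : (0:ℝ) ≤ 1 - t / M),
            mul_nonneg (by linarith [(hB i).2] : (0:ℝ) ≤ 1 - B i) hθ0]
  -- pinned coordinate
  have hpin : ∀ t, 0 ≤ t → t ≤ M → ∃ i : Fin n, π t i = 1 ∨ π t i = -1 := by
    intro t ht0 htM
    rcases le_or_gt t (s 0) with h1 | h1
    · refine ⟨⟨0, by omega⟩, Or.inl ?_⟩
      rw [hπ0]
      rw [min_eq_right (by linarith : (1:ℝ) ≤ 1 + s 0 - t)]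
      exact max_eq_left (by norm_num)
    · rcases le_or_gt (s 0 + 2) t with h2 | h2
      · refine ⟨⟨0, by omega⟩, Or.inr ?_⟩
        rw [hπ0]
        rw [min_eq_left (by linarith : 1 + s 0 - t ≤ 1)]
        exact max_eq_right (by linarith : 1 + s 0 - t ≤ -1)
      · have claim : ∀ d k, k ≤ p - 1 → p - 1 - k ≤ d → s k ≤ t →
            ∃ k', k' ≤ p - 1 ∧ s k' ≤ t ∧ t ≤ e k' := by
          intro d
          induction d with
          | zero =>
            intro k hk hd hst
            have hkeq : k = p - 1 := by omega
            refine ⟨k, hk, hst, ?_⟩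
            rw [hkeq, he_last]
            linarith
          | succ d ih =>
            intro k hk hd hst
            by_cases hkeq : k = p - 1
            · refine ⟨k, hk, hst, ?_⟩
              rw [hkeq, he_last]
              linarith
            · rcases le_or_gt t (s (k+1)) with h | h
              · refine ⟨k, hk, hst, ?_⟩
                rw [he_mid k hkeq]
                exact h
              · exact ih (k+1) (by omega) (by omega) h.le
        obtain ⟨k, hkp1, hkst, hkt⟩ := claim (p-1) 0 (by omega) (by omega) (by linarith)
        set u : Fin p := ⟨p - 1 - k, by omega⟩ with hudef
        have huk : p - 1 - (u:ℕ) = k := by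
          show p - 1 - (p - 1 - k) = k
          omega
        refine ⟨c u, ?_⟩
        rw [hπu u t]
        have hAk : AA k = 1 - (-(ε u)) * A (c u) := by
          rw [← huk]
          exact hfaceA u
        have hw : wfun ((-(ε u)) * A (c u)) ((-(ε u)) * B (c u))
            (e (p - 1 - (u:ℕ))) t = 1 := by
          apply wfun_pin (s' := s k)
          · rw [← hAk]; exact hsAA k
          · exact hkst
          · rw [huk]; exact hkt
        rw [hw, mul_one]
        exact hδpm u
  have hnorm1 : ∀ t ∈ Set.Icc (0:ℝ) M, ‖π t‖ = 1 := by
    intro t htI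
    obtain ⟨i, hi⟩ := hpin t htI.1 htI.2
    apply le_antisymm
    · rw [pi_norm_le_iff_of_nonneg (by norm_num : (0:ℝ) ≤ 1)]
      intro j
      rw [Real.norm_eq_abs]
      exact habs t htI.1 htI.2 j
    · calc (1:ℝ) = ‖π t i‖ := by
            rw [Real.norm_eq_abs]
            rcases hi with h | h <;> rw [h] <;> norm_num
        _ ≤ ‖π t‖ := norm_le_pi_norm _ i
  -- Lipschitz bounds
  have hlipaux : LipschitzWith 1 (fun t : ℝ => 1 + s 0 - t) := by
    apply LipschitzWith.of_dist_le_mul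
    intro x y
    rw [Real.dist_eq, Real.dist_eq, NNReal.coe_one, one_mul]
    have hq : 1 + s 0 - x - (1 + s 0 - y) = -(x - y) := by ring
    rw [hq, abs_neg]
  have hlip : ∀ i, LipschitzWith 1 (fun t => π t i) := by
    intro i
    by_cases h0 : (i:ℕ) = 0
    · have hieq : i = ⟨0, by omega⟩ := Fin.ext h0
      have heq : (fun t => π t i) = fun t => max (min (1 + s 0 - t) 1) (-1) := by
        funext t
        rw [hieq, hπ0]
      rw [heq]
      have := (hlipaux.min_const 1).max_const (-1)
      simpa using this
    · by_cases hu : ∃ u, c u = i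
      · obtain ⟨u, rfl⟩ := hu
        have heq : (fun t => π t (c u)) = fun t => (-(ε u)) *
            wfun ((-(ε u)) * A (c u)) ((-(ε u)) * B (c u)) (e (p - 1 - (u:ℕ))) t := by
          funext t
          rw [hπu]
        rw [heq]
        exact lipschitz_sgn_mul (hδpm u) (wfun_lipschitz _ _ _)
      · have heq : (fun t => π t i) = fun t => A i + (B i - A i) * (t / M) := by
          funext t
          rw [hπlin i t h0 hu]
        rw [heq]
        apply LipschitzWith.of_dist_le_mul
        intro x y
        rw [Real.dist_eq, Real.dist_eq, NNReal.coe_one, one_mul]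
        have hxy : A i + (B i - A i) * (x / M) - (A i + (B i - A i) * (y / M))
            = (B i - A i) / M * (x - y) := by
          field_simp
          ring
        rw [hxy, abs_mul]
        have hba : |(B i - A i) / M| ≤ 1 := by
          rw [abs_div, abs_of_pos hM0, div_le_one hM0, abs_le]
          have h1 := (hA i).1; have h2 := (hA i).2
          have h3 := (hB i).1; have h4 := (hB i).2
          constructor <;> linarith
        nlinarith [abs_nonneg (x - y)]
  have hπdist : ∀ x y : ℝ, dist (π x) (π y) ≤ dist x y := by
    intro x y
    rw [dist_pi_le_iff dist_nonneg]
    intro i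
    have := (hlip i).dist_le_mul x y
    rwa [NNReal.coe_one, one_mul] at this
  -- reparametrized path
  set γ : ℝ → Fin n → ℝ := fun θ => π (M * θ) with hγdef
  have hγdist : ∀ x y : ℝ, dist (γ x) (γ y) ≤ M * dist x y := by
    intro x y
    calc dist (γ x) (γ y) ≤ dist (M * x) (M * y) := hπdist _ _
      _ = M * dist x y := by
          rw [Real.dist_eq, Real.dist_eq, ← mul_sub, abs_mul, abs_of_pos hM0]
  have hγlipW : LipschitzWith (Real.toNNReal M) γ := by
    apply LipschitzWith.of_dist_le_mul
    intro x y
    rw [Real.coe_toNNReal M hM0.le]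
    exact hγdist x y
  have hγcont : ContinuousOn γ (Set.Icc 0 1) := hγlipW.continuous.continuousOn
  have hγ0 : γ 0 = A := by
    show π (M * 0) = A
    rw [mul_zero, hπstart]
  have hγ1 : γ 1 = B := by
    show π (M * 1) = B
    rw [mul_one, hπend]
  have hγnorm : ∀ θ ∈ Set.Icc (0:ℝ) 1, ‖γ θ‖ = 1 := by
    intro θ hθ
    apply hnorm1
    constructor
    · exact mul_nonneg hM0.le hθ.1
    · calc M * θ ≤ M * 1 := mul_le_mul_of_nonneg_left hθ.2 hM0.le
        _ = M := mul_one M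
  have hvar : eVariationOn γ (Set.Icc 0 1) ≤ ENNReal.ofReal M := by
    have := lipschitz_evar_le hM0.le hγdist (zero_le_one (α := ℝ))
    simpa using this
  calc geoDist A B ≤ eVariationOn γ (Set.Icc 0 1) := by
        unfold geoDist
        exact iInf_le_of_le γ (iInf_le_of_le hγcont (iInf_le_of_le hγ0
          (iInf_le_of_le hγ1 (iInf_le_of_le hγnorm le_rfl))))
    _ ≤ ENNReal.ofReal M := hvar

end BuildPath

section Shorten

variable {n : ℕ}

lemma chainTerm_eq_AAseq_mid {A B : Fin n → ℝ} {p : ℕ} {c : Fin p → Fin n}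
    {ε : Fin p → ℝ} (hp : 1 ≤ p) {k : ℕ} (hk1 : 1 ≤ k) (hk2 : k ≤ p - 1) :
    chainTerm A B c ε ⟨p - 1 - k, by omega⟩
      = AAseq A c ε hp k + AAseq B c ε hp (k-1) := by
  have hp2 : 2 ≤ p := by omega
  have pf1 : p - 1 - k < p := by omega
  have pf2 : p - 1 - (k-1) < p := by omega
  have ht : ((⟨p - 1 - k, pf1⟩ : Fin p) : ℕ) ≠ p - 1 := by
    show p - 1 - k ≠ p - 1
    omega
  have hterm := chainTerm_eq_mid A B c ε ⟨p - 1 - k, pf1⟩ ht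
  have hidx : (⟨((⟨p - 1 - k, pf1⟩ : Fin p) : ℕ) + 1,
      by have := (⟨p - 1 - k, pf1⟩ : Fin p).isLt; omega⟩ : Fin p) = ⟨p - 1 - (k-1), pf2⟩ := by
    apply Fin.ext
    show p - 1 - k + 1 = p - 1 - (k - 1)
    omega
  rw [hidx] at hterm
  rw [hterm]
  show 2 + ε ⟨p-1-k, pf1⟩ * A (c ⟨p-1-k, pf1⟩)
      + ε ⟨p-1-(k-1), pf2⟩ * B (c ⟨p-1-(k-1), pf2⟩)
    = (1 + ε ⟨p-1-k, pf1⟩ * A (c ⟨p-1-k, pf1⟩))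
      + (1 + ε ⟨p-1-(k-1), pf2⟩ * B (c ⟨p-1-(k-1), pf2⟩))
  ring

lemma chainTerm_eq_AAseq_wrap {A B : Fin n → ℝ} {p : ℕ} {c : Fin p → Fin n}
    {ε : Fin p → ℝ} (hp : 1 ≤ p) :
    chainTerm A B c ε ⟨p - 1, by omega⟩
      = AAseq A c ε hp 0 + 2 + AAseq B c ε hp (p-1) := by
  have pf0 : p - 1 < p := by omega
  have pfl : p - 1 - (p-1) < p := by omega
  have pfz : p - 1 - 0 < p := by omega
  have ht : ((⟨p - 1, pf0⟩ : Fin p) : ℕ) = p - 1 := rfl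
  have hterm := chainTerm_eq_wrap A B c ε ⟨p - 1, pf0⟩ ht
  have hidx : (⟨0, by have := (⟨p - 1, pf0⟩ : Fin p).isLt; omega⟩ : Fin p)
      = ⟨p - 1 - (p-1), pfl⟩ := by
    apply Fin.ext
    show 0 = p - 1 - (p - 1)
    omega
  rw [hidx] at hterm
  rw [hterm]
  have hz : (⟨p - 1 - 0, pfz⟩ : Fin p) = ⟨p - 1, pf0⟩ := rfl
  show 4 + ε ⟨p-1, pf0⟩ * A (c ⟨p-1, pf0⟩)
      + ε ⟨p-1-(p-1), pfl⟩ * B (c ⟨p-1-(p-1), pfl⟩)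
    = (1 + ε ⟨p-1-0, pfz⟩ * A (c ⟨p-1-0, pfz⟩)) + 2
      + (1 + ε ⟨p-1-(p-1), pfl⟩ * B (c ⟨p-1-(p-1), pfl⟩))
  rw [hz]
  ring

lemma upper_bound (hn : 3 ≤ n) {A B : Fin n → ℝ}
    (hA1 : A ⟨0, Nat.lt_of_lt_of_le (by norm_num) hn⟩ = 1) (hB1 : B ⟨0, Nat.lt_of_lt_of_le (by norm_num) hn⟩ = -1)
    (hA : ∀ i, A i ∈ Set.Icc (-1:ℝ) 1) (hB : ∀ i, B i ∈ Set.Icc (-1:ℝ) 1) :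
    ∀ p : ℕ, ∀ c : Fin p → Fin n, ∀ ε : Fin p → ℝ, ∀ hp : 1 ≤ p,
      Function.Injective c → (∀ t, 1 ≤ ((c t : ℕ))) → (∀ t, ε t = 1 ∨ ε t = -1) →
      geoDist A B ≤ ENNReal.ofReal (candidateLength A B c ε) := by
  intro p
  induction p using Nat.strong_induction_on with
  | _ p IH =>
    intro c ε hp hcinj hc1 hε
    by_cases hsched : ∀ j k : ℕ, j ≤ k → k + 1 ≤ p - 1 →
        AAseq A c ε hp j + AAseq B c ε hp k ≤ candidateLength A B c ε
    · exact build_path hn hA1 hB1 hA hB c ε hp hcinj hc1 hε hsched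
    · push_neg at hsched
      obtain ⟨j, k, hjk, hk1, hviol⟩ := hsched
      have hAAnn : ∀ r, 0 ≤ AAseq A c ε hp r := AAseq_nonneg hp hA hε
      have hAA2 : ∀ r, AAseq A c ε hp r ≤ 2 := AAseq_le_two hp hA hε
      have hDDnn : ∀ r, 0 ≤ AAseq B c ε hp r := AAseq_nonneg hp hB hε
      have hDD2 : ∀ r, AAseq B c ε hp r ≤ 2 := AAseq_le_two hp hB hε
      have hj1 : 1 ≤ j := by
        by_contra hj0
        have hj0' : j = 0 := by omega
        have h1 := AAseq_wrap (A := A) (B := B) (c := c) (ε := ε) hp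
        rw [hj0'] at hviol
        have h2 := hDD2 k
        have h3 := hDDnn (p-1)
        linarith
      set d := k + 1 - j with hd
      have hd1 : 1 ≤ d := by omega
      set p' := p - d with hp'def
      have hp'1 : 1 ≤ p' := by omega
      have hp'lt : p' < p := by omega
      set f : ℕ → ℕ := fun r => if r < j then r else r + d with hf
      have hfl : ∀ r, r ≤ p' - 1 → f r ≤ p - 1 := by
        intro r hr
        simp only [hf]
        split_ifs <;> omega
      have hfinj : ∀ x y, f x = f y → x = y := by
        intro x y hxy
        simp only [hf] at hxy
        split_ifs at hxy <;> omega
      set c' : Fin p' → Fin n :=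
        fun t' => c ⟨p - 1 - f (p' - 1 - (t' : ℕ)), by omega⟩ with hc'
      set ε' : Fin p' → ℝ :=
        fun t' => ε ⟨p - 1 - f (p' - 1 - (t' : ℕ)), by omega⟩ with hε'
      have hAAf : ∀ (X : Fin n → ℝ) (r : ℕ), r ≤ p' - 1 →
          AAseq X c' ε' hp'1 r = AAseq X c ε hp (f r) := by
        intro X r hr
        show 1 + ε' ⟨p' - 1 - r, by omega⟩ * X (c' ⟨p' - 1 - r, by omega⟩)
            = 1 + ε ⟨p - 1 - f r, by omega⟩ * X (c ⟨p - 1 - f r, by omega⟩)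
        simp only [hc', hε']
        have hFin2 : (⟨p - 1 - f (p' - 1 - ((⟨p' - 1 - r, by omega⟩ : Fin p') : ℕ)),
            by omega⟩ : Fin p) = ⟨p - 1 - f r, by omega⟩ := by
          apply Fin.ext
          show p - 1 - f (p' - 1 - (p' - 1 - r)) = p - 1 - f r
          exact congrArg (fun x => p - 1 - f x) (by omega)
        rw [hFin2]
      -- mapped endpoints
      have hf0 : f 0 = 0 := by simp only [hf]; rw [if_pos (by omega : 0 < j)]
      have hflast : f (p' - 1) = p - 1 := by
        simp only [hf]
        rw [if_neg (by omega : ¬ (p' - 1 < j))]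
        omega
      -- all chain terms of the shortened chain are bounded by M
      have hterm' : ∀ t' : Fin p', chainTerm A B c' ε' t'
          ≤ candidateLength A B c ε := by
        intro t'
        by_cases ht' : (t' : ℕ) = p' - 1
        · have heq : t' = ⟨p' - 1 - 0, by omega⟩ := by
            apply Fin.ext
            show (t' : ℕ) = p' - 1 - 0
            omega
          have heq2 : (⟨p' - 1 - 0, by omega⟩ : Fin p') = ⟨p' - 1, by omega⟩ := by
            apply Fin.ext
            show p' - 1 - 0 = p' - 1
            omega
          rw [heq, heq2, chainTerm_eq_AAseq_wrap hp'1]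
          rw [hAAf A 0 (by omega), hAAf B (p'-1) (by omega), hf0, hflast]
          exact AAseq_wrap hp
        · set r := p' - 1 - (t' : ℕ) with hrdef
          have hr1 : 1 ≤ r := by have := t'.isLt; omega
          have hr2 : r ≤ p' - 1 := by omega
          have heq : t' = ⟨p' - 1 - r, by omega⟩ := by
            apply Fin.ext
            show (t' : ℕ) = p' - 1 - r
            have := t'.isLt
            omega
          rw [heq, chainTerm_eq_AAseq_mid hp'1 hr1 hr2]
          rw [hAAf A r hr2, hAAf B (r-1) (by omega)]
          rcases lt_trichotomy r j with hcase | hcase | hcase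
          · have h1 : f r = r := by simp only [hf]; rw [if_pos hcase]
            have h2 : f (r-1) = r - 1 := by
              simp only [hf]; rw [if_pos (by omega)]
            rw [h1, h2]
            exact AAseq_term hp hr1 (by omega)
          · have h1 : f r = k + 1 := by
              simp only [hf]; rw [if_neg (by omega)]; omega
            have h2 : f (r-1) = j - 1 := by
              simp only [hf]; rw [if_pos (by omega)]; omega
            rw [h1, h2]
            have ha := AAseq_term (A := A) (B := B) (c := c) (ε := ε) hp
              (k := k+1) (by omega) (by omega)
            have hb := AAseq_term (A := A) (B := B) (c := c) (ε := ε) hp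
              (k := j) hj1 (by omega)
            have hsub1 : k + 1 - 1 = k := by omega
            have hsub2 : j - 1 = j - 1 := rfl
            rw [hsub1] at ha
            linarith
          · have h1 : f r = r + d := by simp only [hf]; rw [if_neg (by omega)]
            have h2 : f (r-1) = r - 1 + d := by
              simp only [hf]; rw [if_neg (by omega)]
            rw [h1, h2]
            have ha := AAseq_term (A := A) (B := B) (c := c) (ε := ε) hp
              (k := r + d) (by omega) (by omega)
            have hsub : r + d - 1 = r - 1 + d := by omega
            rw [hsub] at ha
            exact ha
      -- conclude via the induction hypothesis
      have hcand' : candidateLength A B c' ε' ≤ candidateLength A B c ε := by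
        apply csSup_le
        · have : Nonempty (Fin p') := ⟨⟨0, by omega⟩⟩
          exact Set.range_nonempty _
        · rintro x ⟨t', rfl⟩
          exact hterm' t'
      have hc'inj : Function.Injective c' := by
        intro a b hab
        simp only [hc'] at hab
        have h1 := hcinj hab
        have h2 := congrArg Fin.val h1
        simp only at h2
        have hfa := hfl (p' - 1 - (a : ℕ)) (by omega)
        have hfb := hfl (p' - 1 - (b : ℕ)) (by omega)
        have h3 : f (p' - 1 - (a : ℕ)) = f (p' - 1 - (b : ℕ)) := by omega
        have h4 := hfinj _ _ h3
        have := a.isLt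
        have := b.isLt
        exact Fin.ext (by omega)
      have hc1' : ∀ t', 1 ≤ ((c' t' : ℕ)) := by
        intro t'
        simp only [hc']
        exact hc1 _
      have hε'pm : ∀ t', ε' t' = 1 ∨ ε' t' = -1 := by
        intro t'
        simp only [hε']
        exact hε _
      calc geoDist A B ≤ ENNReal.ofReal (candidateLength A B c' ε') :=
            IH p' hp'lt c' ε' hp'1 hc'inj hc1' hε'pm
        _ ≤ ENNReal.ofReal (candidateLength A B c ε) :=
            ENNReal.ofReal_le_ofReal hcand'

end Shorten

section Final

lemma SpSet_nonempty {n : ℕ} (hn : 3 ≤ n) (A B : Fin n → ℝ) :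
    (SpSet n A B).Nonempty := by
  refine ⟨candidateLength A B (fun _ : Fin 1 => (⟨1, by omega⟩ : Fin n)) (fun _ => (1:ℝ)),
    1, (fun _ => ⟨1, by omega⟩), (fun _ => 1), le_rfl, by omega, ?_, ?_, ?_, rfl⟩
  · intro a b _
    exact Subsingleton.elim a b
  · intro t
    exact le_rfl
  · intro t
    exact Or.inl rfl

theorem statement19' {n : ℕ} (hn : 3 ≤ n) (A B : Fin n → ℝ)
    (hA1 : A ⟨0, Nat.lt_of_lt_of_le (by norm_num) hn⟩ = 1) (hB1 : B ⟨0, Nat.lt_of_lt_of_le (by norm_num) hn⟩ = -1)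
    (hA : ∀ i, A i ∈ Set.Icc (-1:ℝ) 1) (hB : ∀ i, B i ∈ Set.Icc (-1:ℝ) 1) :
    geoDist A B = ENNReal.ofReal (sInf (SpSet n A B)) := by
  apply le_antisymm
  · obtain ⟨p, c, ε, hp1, hpn, hcinj, hc1, hεpm, heq⟩ :=
      (SpSet_nonempty hn A B).csInf_mem (SpSet_finite A B)
    calc geoDist A B ≤ ENNReal.ofReal (candidateLength A B c ε) :=
          upper_bound hn hA1 hB1 hA hB p c ε hp1 hcinj hc1 hεpm
      _ = ENNReal.ofReal (sInf (SpSet n A B)) := by rw [← heq]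
  · unfold geoDist
    refine le_iInf fun γ => le_iInf fun hcont => le_iInf fun hγ0 =>
      le_iInf fun hγ1 => le_iInf fun hnorm => ?_
    exact lower_bound hn hA1 hB1 hA hB hcont hγ0 hγ1 hnorm

end Final


theorem statement19 {n : ℕ} (hn : 3 ≤ n) (A B : Fin n → ℝ)
    (hA1 : A ⟨0, by omega⟩ = 1) (hB1 : B ⟨0, by omega⟩ = -1)
    (hA : ∀ i, A i ∈ Icc (-1:ℝ) 1) (hB : ∀ i, B i ∈ Icc (-1:ℝ) 1) :
    geoDist A B =
      ENNReal.ofReal (sInf {q : ℝ |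
        ∃ (p : ℕ) (c : Fin p → Fin n) (ε : Fin p → ℝ),
          1 ≤ p ∧ p ≤ n - 1 ∧ Function.Injective c ∧ (∀ t, 1 ≤ ((c t : ℕ))) ∧
          (∀ t, ε t = 1 ∨ ε t = -1) ∧ q = candidateLength A B c ε}) :=
  statement19' hn A B hA1 hB1 hA hB
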